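/- Let p₁, p₂, p₃ ≥ 2 be integers, let S = {(l₁,l₂,l₃) ∈ ℤ³ : 0 ≤ lᵢ ≤ pᵢ − 2}, and for j ∈ {1,2,3} let σⱼ : S → S be the involution with (σⱼ(l))ⱼ = lⱼ and (σⱼ(l))ᵢ = pᵢ − 2 − lᵢ for i ≠ j. Then the action of the group generated by σ₁, σ₂, σ₃ on S has exactly one orbit if and only if the multiset {p₁, p₂, p₃} is one of {2,2,2}, {2,2,3}, {2,3,3}. -/

import Mathlib

/-- The index set S = {(l₁,l₂,l₃) ∈ ℤ³ : 0 ≤ lᵢ ≤ pᵢ − 2}. -/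
abbrev SBox (p : Fin 3 → ℤ) := {l : Fin 3 → ℤ // ∀ i, 0 ≤ l i ∧ l i ≤ p i - 2}

/-- The map σⱼ : S → S fixing the j-th coordinate and sending lᵢ to pᵢ − 2 − lᵢ for i ≠ j. -/
def sigmaFun (p : Fin 3 → ℤ) (j : Fin 3) (l : SBox p) : SBox p :=
  ⟨fun i => if i = j then l.1 i else p i - 2 - l.1 i, by
    intro i
    rcases eq_or_ne i j with h | h
    · subst h; simpa using l.2 i
    · have := l.2 i; simp only [if_neg h]; omega⟩

lemma sigmaFun_involutive (p : Fin 3 → ℤ) (j : Fin 3) :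
    Function.Involutive (sigmaFun p j) := by
  intro l
  apply Subtype.ext
  funext i
  by_cases h : i = j <;> simp [sigmaFun, h]

/-- σⱼ as a permutation of S. -/
def sigmaPerm (p : Fin 3 → ℤ) (j : Fin 3) : Equiv.Perm (SBox p) :=
  (sigmaFun_involutive p j).toPerm

/-!
For distinct `i j k` we have `σᵢ σⱼ = σₖ`, so `σ₁, σ₂, σ₃` generate the Klein four-group
`{1, σ₁, σ₂, σ₃}` and the action is transitive iff every point of `S` is `0` or some `σⱼ 0`.
Writing `qᵢ = pᵢ - 2`, the point `(min qᵢ 1)ᵢ` is of this form only if every `qᵢ ≤ 1` and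
`q₁ + q₂ + q₃ ≤ 2`, and under these two conditions every point of `S` is.
-/

namespace SBox

variable {p : Fin 3 → ℤ}

theorem ext_iff {x y : SBox p} : x = y ↔ x.1 0 = y.1 0 ∧ x.1 1 = y.1 1 ∧ x.1 2 = y.1 2 := by
  simp [Subtype.ext_iff, funext_iff, Fin.forall_fin_succ]

def zero (hp : ∀ i, 2 ≤ p i) : SBox p := ⟨0, fun i => ⟨le_rfl, by simpa using hp i⟩⟩

end SBox

section

variable (p : Fin 3 → ℤ)

theorem sigmaPerm_apply_coe (j : Fin 3) (l : SBox p) (i : Fin 3) :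
    (sigmaPerm p j l).1 i = if i = j then l.1 i else p i - 2 - l.1 i := rfl

theorem sigmaPerm_mul_self (j : Fin 3) : sigmaPerm p j * sigmaPerm p j = 1 :=
  Equiv.ext (sigmaFun_involutive p j)

theorem sigmaPerm_mul_sigmaPerm {i j k : Fin 3} (hij : i ≠ j) (hik : i ≠ k) (hjk : j ≠ k) :
    sigmaPerm p i * sigmaPerm p j = sigmaPerm p k := by
  ext l m
  simp only [Equiv.Perm.mul_apply, sigmaPerm_apply_coe]
  fin_cases i <;> fin_cases j <;> fin_cases k <;> fin_cases m <;> simp_all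

theorem sigmaPerm_mul_sigmaPerm_mem (i j : Fin 3) :
    sigmaPerm p i * sigmaPerm p j ∈ insert 1 (Set.range (sigmaPerm p)) := by
  rcases eq_or_ne i j with rfl | hij
  · exact Or.inl (sigmaPerm_mul_self p i)
  obtain ⟨k, hik, hjk⟩ : ∃ k, i ≠ k ∧ j ≠ k := by
    revert hij; fin_cases i <;> fin_cases j <;> decide
  exact Or.inr ⟨k, (sigmaPerm_mul_sigmaPerm p hij hik hjk).symm⟩

def kleinFour : Subgroup (Equiv.Perm (SBox p)) where
  carrier := insert 1 (Set.range (sigmaPerm p))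
  one_mem' := Or.inl rfl
  mul_mem' := by
    rintro _ _ (rfl | ⟨i, rfl⟩) (rfl | ⟨j, rfl⟩)
    · exact Or.inl (one_mul 1)
    · exact Or.inr ⟨j, (one_mul _).symm⟩
    · exact Or.inr ⟨i, (mul_one _).symm⟩
    · exact sigmaPerm_mul_sigmaPerm_mem p i j
  inv_mem' := by
    rintro _ (rfl | ⟨j, rfl⟩)
    · exact Or.inl inv_one
    · exact Or.inr ⟨j, (inv_eq_of_mul_eq_one_right (sigmaPerm_mul_self p j)).symm⟩

theorem closure_sigmaPerm_le_kleinFour :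
    Subgroup.closure {sigmaPerm p 0, sigmaPerm p 1, sigmaPerm p 2} ≤ kleinFour p :=
  (Subgroup.closure_le _).2 <| by rintro _ (rfl | rfl | rfl) <;> exact Or.inr ⟨_, rfl⟩

theorem mem_orbit_closure_sigmaPerm_iff (x y : SBox p) :
    x ∈ MulAction.orbit (Subgroup.closure {sigmaPerm p 0, sigmaPerm p 1, sigmaPerm p 2}) y ↔
      x = y ∨ ∃ j, x = sigmaPerm p j y := by
  constructor
  · rintro ⟨⟨g, hg⟩, rfl⟩
    rcases closure_sigmaPerm_le_kleinFour p hg with rfl | ⟨j, rfl⟩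
    · exact Or.inl rfl
    · exact Or.inr ⟨j, rfl⟩
  · rintro (rfl | ⟨j, rfl⟩)
    · exact MulAction.mem_orbit_self _
    · have hj : sigmaPerm p j ∈ Subgroup.closure {sigmaPerm p 0, sigmaPerm p 1, sigmaPerm p 2} :=
        Subgroup.subset_closure (by fin_cases j <;> simp)
      exact ⟨⟨_, hj⟩, rfl⟩

end

theorem forall_eq_sigmaPerm_zero_iff {p : Fin 3 → ℤ} (hp : ∀ i, 2 ≤ p i) :
    (∀ x : SBox p, x = SBox.zero hp ∨ ∃ j, x = sigmaPerm p j (SBox.zero hp)) ↔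
      p 0 ≤ 3 ∧ p 1 ≤ 3 ∧ p 2 ≤ 3 ∧ p 0 + p 1 + p 2 ≤ 8 := by
  simp only [SBox.ext_iff, Fin.exists_fin_succ, Fin.succ_zero_eq_one, Fin.succ_one_eq_two,
    IsEmpty.exists_iff, or_false, sigmaPerm_apply_coe, SBox.zero, Pi.zero_apply, Fin.reduceEq,
    ↓reduceIte, sub_zero]
  constructor
  · intro h
    have hw : ∀ i, 0 ≤ min (p i - 2) 1 ∧ min (p i - 2) 1 ≤ p i - 2 := fun i => by
      have := hp i; omega
    have := h ⟨fun i => min (p i - 2) 1, hw⟩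
    dsimp only at this
    omega
  · intro hle x
    have := x.2 0; have := x.2 1; have := x.2 2
    omega

theorem multiset_eq_222_or_223_or_233_iff {a b c : ℤ} (ha : 2 ≤ a) (hb : 2 ≤ b) (hc : 2 ≤ c) :
    (({a, b, c} : Multiset ℤ) = {2, 2, 2} ∨ ({a, b, c} : Multiset ℤ) = {2, 2, 3} ∨
      ({a, b, c} : Multiset ℤ) = {2, 3, 3}) ↔ a ≤ 3 ∧ b ≤ 3 ∧ c ≤ 3 ∧ a + b + c ≤ 8 := by
  constructor
  · intro h
    have hbound : (∀ x ∈ ({a, b, c} : Multiset ℤ), x ≤ 3) ∧ ({a, b, c} : Multiset ℤ).sum ≤ 8 := by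
      rcases h with h | h | h <;> rw [h] <;> decide
    simp only [Multiset.insert_eq_cons, Multiset.mem_cons, Multiset.mem_singleton,
      forall_eq_or_imp, forall_eq, Multiset.sum_cons, Multiset.sum_singleton] at hbound
    omega
  · rintro ⟨ha', hb', hc', hs⟩
    interval_cases a <;> interval_cases b <;> interval_cases c <;> first | omega | decide

/-- Transitivity criterion (Corollary 2.6, combinatorial form): the group generated by
σ₁, σ₂, σ₃ has exactly one orbit on S iff the weight type is (2,2,2), (2,2,3) or (2,3,3)
as a multiset. -/
theorem one_orbit_iff (p : Fin 3 → ℤ) (hp : ∀ i, 2 ≤ p i) :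
    Nat.card (Quotient (MulAction.orbitRel
      (Subgroup.closure {sigmaPerm p 0, sigmaPerm p 1, sigmaPerm p 2}) (SBox p))) = 1 ↔
    (({p 0, p 1, p 2} : Multiset ℤ) = {2, 2, 2} ∨
     ({p 0, p 1, p 2} : Multiset ℤ) = {2, 2, 3} ∨
     ({p 0, p 1, p 2} : Multiset ℤ) = {2, 3, 3}) := by
  rw [Nat.card_eq_one_iff_unique, and_iff_left ⟨Quotient.mk _ (SBox.zero hp)⟩,
    ← MulAction.pretransitive_iff_subsingleton_quotient,
    MulAction.isPretransitive_iff_base (SBox.zero hp),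
    multiset_eq_222_or_223_or_233_iff (hp 0) (hp 1) (hp 2), ← forall_eq_sigmaPerm_zero_iff hp]
  simp only [← MulAction.mem_orbit_iff, mem_orbit_closure_sigmaPerm_iff]
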